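/- Let ξ ∈ ℝ⁷ be nonzero and let α be an antisymmetric 7×7 real matrix satisfying Σ_{c,d=1}^{7} α_{cd} ψ_{cdab} = 4 α_{ab} for all a,b (i.e. α lies in Λ²₇) and Σ_{m,n,p=1}^{7} ξ_m α_{np} φ_{mnp} = 0. Then there exists γ ∈ ℝ⁷ such that α = π₇(ξ∧γ), where (ξ∧γ)_{ab} := ξ_a γ_b − ξ_b γ_a and π₇(σ)_{ab} := (1/3)(σ_{ab} + (1/2) Σ_{c,d} σ_{cd} ψ_{cdab}). (This is the exactness at Λ²₇, on the level of leading symbols, of the canonical G₂ complex 0 → Λ⁰ → Λ¹ → Λ²₇ → Λ³₁ → 0.) -/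
import Mathlib

noncomputable section

/-- Components of the standard associative 3-form on sorted index triples
(0-indexed: `e^{123} ↦ (0,1,2)`, etc.). -/
def phi0 : Fin 7 → Fin 7 → Fin 7 → ℝ := fun a b c =>
  if (a, b, c) = (0, 1, 2) then 1
  else if (a, b, c) = (0, 3, 4) then 1
  else if (a, b, c) = (0, 5, 6) then 1
  else if (a, b, c) = (1, 3, 5) then 1
  else if (a, b, c) = (1, 4, 6) then -1
  else if (a, b, c) = (2, 3, 6) then -1
  else if (a, b, c) = (2, 4, 5) then -1
  else 0

/-- The totally antisymmetric components `φ_{abc}` of the standard associative 3-form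
`φ = e^{123}+e^{145}+e^{167}+e^{246}−e^{257}−e^{347}−e^{356}` on `ℝ⁷`. -/
def phi (a b c : Fin 7) : ℝ :=
  ∑ σ : Equiv.Perm (Fin 3),
    ((Equiv.Perm.sign σ : ℤ) : ℝ) * phi0 (![a, b, c] (σ 0)) (![a, b, c] (σ 1)) (![a, b, c] (σ 2))

/-- Components of the standard coassociative 4-form on sorted index quadruples. -/
def psi0 : Fin 7 → Fin 7 → Fin 7 → Fin 7 → ℝ := fun a b c d =>
  if (a, b, c, d) = (3, 4, 5, 6) then 1
  else if (a, b, c, d) = (1, 2, 5, 6) then 1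
  else if (a, b, c, d) = (1, 2, 3, 4) then 1
  else if (a, b, c, d) = (0, 2, 4, 6) then 1
  else if (a, b, c, d) = (0, 2, 3, 5) then -1
  else if (a, b, c, d) = (0, 1, 4, 5) then -1
  else if (a, b, c, d) = (0, 1, 3, 6) then -1
  else 0

/-- The totally antisymmetric components `ψ_{abcd}` of the standard coassociative 4-form
`ψ = ⋆φ = e^{4567}+e^{2367}+e^{2345}+e^{1357}−e^{1346}−e^{1256}−e^{1247}` on `ℝ⁷`. -/
def psi (a b c d : Fin 7) : ℝ :=
  ∑ σ : Equiv.Perm (Fin 4),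
    ((Equiv.Perm.sign σ : ℤ) : ℝ) *
      psi0 (![a, b, c, d] (σ 0)) (![a, b, c, d] (σ 1)) (![a, b, c, d] (σ 2)) (![a, b, c, d] (σ 3))

/-- The Kronecker delta `δ_{ab}`. -/
def delta (a b : Fin 7) : ℝ := if a = b then 1 else 0

/-! ### Auxiliary integer tables and machinery -/

def phiT : Fin 7 → Fin 7 → Fin 7 → ℤ := fun a b c => ![![![0, 0, 0, 0, 0, 0, 0], ![0, 0, 1, 0, 0, 0, 0], ![0, -1, 0, 0, 0, 0, 0], ![0, 0, 0, 0, 1, 0, 0], ![0, 0, 0, -1, 0, 0, 0], ![0, 0, 0, 0, 0, 0, 1], ![0, 0, 0, 0, 0, -1, 0]], ![![0, 0, -1, 0, 0, 0, 0], ![0, 0, 0, 0, 0, 0, 0], ![1, 0, 0, 0, 0, 0, 0], ![0, 0, 0, 0, 0, 1, 0], ![0, 0, 0, 0, 0, 0, -1], ![0, 0, 0, -1, 0, 0, 0], ![0, 0, 0, 0, 1, 0, 0]], ![![0, 1, 0, 0, 0, 0, 0], ![-1, 0, 0, 0, 0, 0, 0], ![0, 0, 0, 0, 0, 0, 0], ![0,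 0, 0, 0, 0, 0, -1], ![0, 0, 0, 0, 0, -1, 0], ![0, 0, 0, 0, 1, 0, 0], ![0, 0, 0, 1, 0, 0, 0]], ![![0, 0, 0, 0, -1, 0, 0], ![0, 0, 0, 0, 0, -1, 0], ![0, 0, 0, 0, 0, 0, 1], ![0, 0, 0, 0, 0, 0, 0], ![1, 0, 0, 0, 0, 0, 0], ![0, 1, 0, 0, 0, 0, 0], ![0, 0, -1, 0, 0, 0, 0]], ![![0, 0, 0, 1, 0, 0, 0], ![0, 0, 0, 0, 0, 0, 1], ![0, 0, 0, 0, 0, 1, 0], ![-1, 0, 0, 0, 0, 0, 0], ![0, 0, 0, 0, 0, 0, 0], ![0, 0, -1, 0, 0, 0, 0], ![0, -1, 0, 0, 0, 0, 0]], ![![0, 0, 0, 0, 0, 0, -1], ![0, 0, 0, 1, 0, 0, 0], ![0, 0, 0, 0, -1, 0, 0], ![0, -1, 0, 0, 0, 0, 0], ![0, 0, 1, 0, 0, 0, 0], ![0, 0, 0, 0, 0, 0, 0], ![1, 0, 0, 0, 0, 0, 0]], ![![0, 0, 0, 0, 0, 1, 0], ![0, 0, 0, 0, -1, 0, 0], ![0,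 0, 0, -1, 0, 0, 0], ![0, 0, 1, 0, 0, 0, 0], ![0, 1, 0, 0, 0, 0, 0], ![-1, 0, 0, 0, 0, 0, 0], ![0, 0, 0, 0, 0, 0, 0]]] a b c

def psiT : Fin 7 → Fin 7 → Fin 7 → Fin 7 → ℤ := fun a b c d => ![![![![0, 0, 0, 0, 0, 0, 0], ![0, 0, 0, 0, 0, 0, 0], ![0, 0, 0, 0, 0, 0, 0], ![0, 0, 0, 0, 0, 0, 0], ![0, 0, 0, 0, 0, 0, 0], ![0, 0, 0, 0, 0, 0, 0], ![0, 0, 0, 0, 0, 0, 0]], ![![0, 0, 0, 0, 0, 0, 0], ![0, 0, 0, 0, 0, 0, 0], ![0, 0, 0, 0, 0, 0, 0], ![0, 0, 0, 0, 0, 0, -1], ![0, 0, 0, 0, 0, -1, 0], ![0, 0, 0, 0, 1, 0, 0], ![0, 0, 0, 1, 0, 0, 0]], ![![0, 0, 0, 0, 0, 0, 0], ![0, 0, 0, 0, 0, 0, 0], ![0, 0, 0, 0, 0, 0, 0], ![0, 0, 0, 0, 0, -1, 0], ![0, 0, 0, 0, 0, 0, 1], ![0, 0, 0, 1, 0, 0,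 0], ![0, 0, 0, 0, -1, 0, 0]], ![![0, 0, 0, 0, 0, 0, 0], ![0, 0, 0, 0, 0, 0, 1], ![0, 0, 0, 0, 0, 1, 0], ![0, 0, 0, 0, 0, 0, 0], ![0, 0, 0, 0, 0, 0, 0], ![0, 0, -1, 0, 0, 0, 0], ![0, -1, 0, 0, 0, 0, 0]], ![![0, 0, 0, 0, 0, 0, 0], ![0, 0, 0, 0, 0, 1, 0], ![0, 0, 0, 0, 0, 0, -1], ![0, 0, 0, 0, 0, 0, 0], ![0, 0, 0, 0, 0, 0, 0], ![0, -1, 0, 0, 0, 0, 0], ![0, 0, 1, 0, 0, 0, 0]], ![![0, 0, 0, 0, 0, 0, 0], ![0, 0, 0, 0, -1, 0, 0], ![0, 0, 0, -1, 0, 0, 0], ![0, 0, 1, 0, 0, 0, 0], ![0, 1, 0, 0, 0, 0, 0], ![0, 0, 0, 0, 0, 0, 0], ![0, 0, 0, 0, 0, 0, 0]], ![![0, 0, 0, 0, 0, 0, 0], ![0, 0, 0, -1, 0, 0, 0], ![0, 0, 0, 0, 1, 0, 0], ![0, 1, 0, 0, 0, 0, 0], ![0, 0, -1, 0, 0, 0,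 0], ![0, 0, 0, 0, 0, 0, 0], ![0, 0, 0, 0, 0, 0, 0]]], ![![![0, 0, 0, 0, 0, 0, 0], ![0, 0, 0, 0, 0, 0, 0], ![0, 0, 0, 0, 0, 0, 0], ![0, 0, 0, 0, 0, 0, 1], ![0, 0, 0, 0, 0, 1, 0], ![0, 0, 0, 0, -1, 0, 0], ![0, 0, 0, -1, 0, 0, 0]], ![![0, 0, 0, 0, 0, 0, 0], ![0, 0, 0, 0, 0, 0, 0], ![0, 0, 0, 0, 0, 0, 0], ![0, 0, 0, 0, 0, 0, 0], ![0, 0, 0, 0, 0, 0, 0], ![0, 0, 0, 0, 0, 0, 0], ![0, 0, 0, 0, 0, 0, 0]], ![![0, 0, 0, 0, 0, 0, 0], ![0, 0, 0, 0, 0, 0, 0], ![0, 0, 0, 0, 0, 0, 0], ![0, 0, 0, 0, 1, 0, 0], ![0, 0, 0, -1, 0, 0, 0], ![0, 0, 0, 0, 0, 0, 1], ![0, 0, 0, 0, 0, -1, 0]], ![![0, 0, 0, 0, 0, 0, -1], ![0, 0, 0, 0, 0, 0, 0], ![0, 0, 0, 0, -1, 0, 0], ![0, 0, 0, 0, 0,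 0, 0], ![0, 0, 1, 0, 0, 0, 0], ![0, 0, 0, 0, 0, 0, 0], ![1, 0, 0, 0, 0, 0, 0]], ![![0, 0, 0, 0, 0, -1, 0], ![0, 0, 0, 0, 0, 0, 0], ![0, 0, 0, 1, 0, 0, 0], ![0, 0, -1, 0, 0, 0, 0], ![0, 0, 0, 0, 0, 0, 0], ![1, 0, 0, 0, 0, 0, 0], ![0, 0, 0, 0, 0, 0, 0]], ![![0, 0, 0, 0, 1, 0, 0], ![0, 0, 0, 0, 0, 0, 0], ![0, 0, 0, 0, 0, 0, -1], ![0, 0, 0, 0, 0, 0, 0], ![-1, 0, 0, 0, 0, 0, 0], ![0, 0, 0, 0, 0, 0, 0], ![0, 0, 1, 0, 0, 0, 0]], ![![0, 0, 0, 1, 0, 0, 0], ![0, 0, 0, 0, 0, 0, 0], ![0, 0, 0, 0, 0, 1, 0], ![-1, 0, 0, 0, 0, 0, 0], ![0, 0, 0, 0, 0, 0, 0], ![0, 0, -1, 0, 0, 0, 0], ![0, 0, 0, 0, 0, 0, 0]]], ![![![0, 0, 0, 0, 0, 0, 0], ![0, 0, 0, 0, 0, 0, 0], ![0, 0, 0,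 0, 0, 0, 0], ![0, 0, 0, 0, 0, 1, 0], ![0, 0, 0, 0, 0, 0, -1], ![0, 0, 0, -1, 0, 0, 0], ![0, 0, 0, 0, 1, 0, 0]], ![![0, 0, 0, 0, 0, 0, 0], ![0, 0, 0, 0, 0, 0, 0], ![0, 0, 0, 0, 0, 0, 0], ![0, 0, 0, 0, -1, 0, 0], ![0, 0, 0, 1, 0, 0, 0], ![0, 0, 0, 0, 0, 0, -1], ![0, 0, 0, 0, 0, 1, 0]], ![![0, 0, 0, 0, 0, 0, 0], ![0, 0, 0, 0, 0, 0, 0], ![0, 0, 0, 0, 0, 0, 0], ![0, 0, 0, 0, 0, 0, 0], ![0, 0, 0, 0, 0, 0, 0], ![0, 0, 0, 0, 0, 0, 0], ![0, 0, 0, 0, 0, 0, 0]], ![![0, 0, 0, 0, 0, -1, 0], ![0, 0, 0, 0, 1, 0, 0], ![0, 0, 0, 0, 0, 0, 0], ![0, 0, 0, 0, 0, 0, 0], ![0, -1, 0, 0, 0, 0, 0], ![1, 0, 0, 0, 0, 0, 0], ![0, 0, 0, 0, 0, 0, 0]], ![![0, 0, 0, 0, 0, 0, 1], ![0, 0, 0,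 -1, 0, 0, 0], ![0, 0, 0, 0, 0, 0, 0], ![0, 1, 0, 0, 0, 0, 0], ![0, 0, 0, 0, 0, 0, 0], ![0, 0, 0, 0, 0, 0, 0], ![-1, 0, 0, 0, 0, 0, 0]], ![![0, 0, 0, 1, 0, 0, 0], ![0, 0, 0, 0, 0, 0, 1], ![0, 0, 0, 0, 0, 0, 0], ![-1, 0, 0, 0, 0, 0, 0], ![0, 0, 0, 0, 0, 0, 0], ![0, 0, 0, 0, 0, 0, 0], ![0, -1, 0, 0, 0, 0, 0]], ![![0, 0, 0, 0, -1, 0, 0], ![0, 0, 0, 0, 0, -1, 0], ![0, 0, 0, 0, 0, 0, 0], ![0, 0, 0, 0, 0, 0, 0], ![1, 0, 0, 0, 0, 0, 0], ![0, 1, 0, 0, 0, 0, 0], ![0, 0, 0, 0, 0, 0, 0]]], ![![![0, 0, 0, 0, 0, 0, 0], ![0, 0, 0, 0, 0, 0, -1], ![0, 0, 0, 0, 0, -1, 0], ![0, 0, 0, 0, 0, 0, 0], ![0, 0, 0, 0, 0, 0, 0], ![0, 0, 1, 0, 0, 0, 0], ![0, 1, 0, 0, 0, 0, 0]], ![![0,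 0, 0, 0, 0, 0, 1], ![0, 0, 0, 0, 0, 0, 0], ![0, 0, 0, 0, 1, 0, 0], ![0, 0, 0, 0, 0, 0, 0], ![0, 0, -1, 0, 0, 0, 0], ![0, 0, 0, 0, 0, 0, 0], ![-1, 0, 0, 0, 0, 0, 0]], ![![0, 0, 0, 0, 0, 1, 0], ![0, 0, 0, 0, -1, 0, 0], ![0, 0, 0, 0, 0, 0, 0], ![0, 0, 0, 0, 0, 0, 0], ![0, 1, 0, 0, 0, 0, 0], ![-1, 0, 0, 0, 0, 0, 0], ![0, 0, 0, 0, 0, 0, 0]], ![![0, 0, 0, 0, 0, 0, 0], ![0, 0, 0, 0, 0, 0, 0], ![0, 0, 0, 0, 0, 0, 0], ![0, 0, 0, 0, 0, 0, 0], ![0, 0, 0, 0, 0, 0, 0], ![0, 0, 0, 0, 0, 0, 0], ![0, 0, 0, 0, 0, 0, 0]], ![![0, 0, 0, 0, 0, 0, 0], ![0, 0, 1, 0, 0, 0, 0], ![0, -1, 0, 0, 0, 0, 0], ![0, 0, 0, 0, 0, 0, 0], ![0, 0, 0, 0, 0, 0, 0], ![0, 0, 0, 0, 0, 0, 1], ![0,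 0, 0, 0, 0, -1, 0]], ![![0, 0, -1, 0, 0, 0, 0], ![0, 0, 0, 0, 0, 0, 0], ![1, 0, 0, 0, 0, 0, 0], ![0, 0, 0, 0, 0, 0, 0], ![0, 0, 0, 0, 0, 0, -1], ![0, 0, 0, 0, 0, 0, 0], ![0, 0, 0, 0, 1, 0, 0]], ![![0, -1, 0, 0, 0, 0, 0], ![1, 0, 0, 0, 0, 0, 0], ![0, 0, 0, 0, 0, 0, 0], ![0, 0, 0, 0, 0, 0, 0], ![0, 0, 0, 0, 0, 1, 0], ![0, 0, 0, 0, -1, 0, 0], ![0, 0, 0, 0, 0, 0, 0]]], ![![![0, 0, 0, 0, 0, 0, 0], ![0, 0, 0, 0, 0, -1, 0], ![0, 0, 0, 0, 0, 0, 1], ![0, 0, 0, 0, 0, 0, 0], ![0, 0, 0, 0, 0, 0, 0], ![0, 1, 0, 0, 0, 0, 0], ![0, 0, -1, 0, 0, 0, 0]], ![![0, 0, 0, 0, 0, 1, 0], ![0, 0, 0, 0, 0, 0, 0], ![0, 0, 0, -1, 0, 0, 0], ![0, 0, 1, 0, 0, 0, 0], ![0, 0, 0, 0, 0, 0, 0],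 ![-1, 0, 0, 0, 0, 0, 0], ![0, 0, 0, 0, 0, 0, 0]], ![![0, 0, 0, 0, 0, 0, -1], ![0, 0, 0, 1, 0, 0, 0], ![0, 0, 0, 0, 0, 0, 0], ![0, -1, 0, 0, 0, 0, 0], ![0, 0, 0, 0, 0, 0, 0], ![0, 0, 0, 0, 0, 0, 0], ![1, 0, 0, 0, 0, 0, 0]], ![![0, 0, 0, 0, 0, 0, 0], ![0, 0, -1, 0, 0, 0, 0], ![0, 1, 0, 0, 0, 0, 0], ![0, 0, 0, 0, 0, 0, 0], ![0, 0, 0, 0, 0, 0, 0], ![0, 0, 0, 0, 0, 0, -1], ![0, 0, 0, 0, 0, 1, 0]], ![![0, 0, 0, 0, 0, 0, 0], ![0, 0, 0, 0, 0, 0, 0], ![0, 0, 0, 0, 0, 0, 0], ![0, 0, 0, 0, 0, 0, 0], ![0, 0, 0, 0, 0, 0, 0], ![0, 0, 0, 0, 0, 0, 0], ![0, 0, 0, 0, 0, 0, 0]], ![![0, -1, 0, 0, 0, 0, 0], ![1, 0, 0, 0, 0, 0, 0], ![0, 0, 0, 0, 0, 0, 0], ![0, 0, 0, 0, 0, 0,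 1], ![0, 0, 0, 0, 0, 0, 0], ![0, 0, 0, 0, 0, 0, 0], ![0, 0, 0, -1, 0, 0, 0]], ![![0, 0, 1, 0, 0, 0, 0], ![0, 0, 0, 0, 0, 0, 0], ![-1, 0, 0, 0, 0, 0, 0], ![0, 0, 0, 0, 0, -1, 0], ![0, 0, 0, 0, 0, 0, 0], ![0, 0, 0, 1, 0, 0, 0], ![0, 0, 0, 0, 0, 0, 0]]], ![![![0, 0, 0, 0, 0, 0, 0], ![0, 0, 0, 0, 1, 0, 0], ![0, 0, 0, 1, 0, 0, 0], ![0, 0, -1, 0, 0, 0, 0], ![0, -1, 0, 0, 0, 0, 0], ![0, 0, 0, 0, 0, 0, 0], ![0, 0, 0, 0, 0, 0, 0]], ![![0, 0, 0, 0, -1, 0, 0], ![0, 0, 0, 0, 0, 0, 0], ![0, 0, 0, 0, 0, 0, 1], ![0, 0, 0, 0, 0, 0, 0], ![1, 0, 0, 0, 0, 0, 0], ![0, 0, 0, 0, 0, 0, 0], ![0, 0, -1, 0, 0, 0, 0]], ![![0, 0, 0, -1, 0, 0, 0], ![0, 0, 0, 0, 0, 0, -1], ![0, 0, 0, 0, 0,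 0, 0], ![1, 0, 0, 0, 0, 0, 0], ![0, 0, 0, 0, 0, 0, 0], ![0, 0, 0, 0, 0, 0, 0], ![0, 1, 0, 0, 0, 0, 0]], ![![0, 0, 1, 0, 0, 0, 0], ![0, 0, 0, 0, 0, 0, 0], ![-1, 0, 0, 0, 0, 0, 0], ![0, 0, 0, 0, 0, 0, 0], ![0, 0, 0, 0, 0, 0, 1], ![0, 0, 0, 0, 0, 0, 0], ![0, 0, 0, 0, -1, 0, 0]], ![![0, 1, 0, 0, 0, 0, 0], ![-1, 0, 0, 0, 0, 0, 0], ![0, 0, 0, 0, 0, 0, 0], ![0, 0, 0, 0, 0, 0, -1], ![0, 0, 0, 0, 0, 0, 0], ![0, 0, 0, 0, 0, 0, 0], ![0, 0, 0, 1, 0, 0, 0]], ![![0, 0, 0, 0, 0, 0, 0], ![0, 0, 0, 0, 0, 0, 0], ![0, 0, 0, 0, 0, 0, 0], ![0, 0, 0, 0, 0, 0, 0], ![0, 0, 0, 0, 0, 0, 0], ![0, 0, 0, 0, 0, 0, 0], ![0, 0, 0, 0, 0, 0, 0]], ![![0, 0, 0, 0, 0, 0, 0], ![0, 0, 1, 0,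 0, 0, 0], ![0, -1, 0, 0, 0, 0, 0], ![0, 0, 0, 0, 1, 0, 0], ![0, 0, 0, -1, 0, 0, 0], ![0, 0, 0, 0, 0, 0, 0], ![0, 0, 0, 0, 0, 0, 0]]], ![![![0, 0, 0, 0, 0, 0, 0], ![0, 0, 0, 1, 0, 0, 0], ![0, 0, 0, 0, -1, 0, 0], ![0, -1, 0, 0, 0, 0, 0], ![0, 0, 1, 0, 0, 0, 0], ![0, 0, 0, 0, 0, 0, 0], ![0, 0, 0, 0, 0, 0, 0]], ![![0, 0, 0, -1, 0, 0, 0], ![0, 0, 0, 0, 0, 0, 0], ![0, 0, 0, 0, 0, -1, 0], ![1, 0, 0, 0, 0, 0, 0], ![0, 0, 0, 0, 0, 0, 0], ![0, 0, 1, 0, 0, 0, 0], ![0, 0, 0, 0, 0, 0, 0]], ![![0, 0, 0, 0, 1, 0, 0], ![0, 0, 0, 0, 0, 1, 0], ![0, 0, 0, 0, 0, 0, 0], ![0, 0, 0, 0, 0, 0, 0], ![-1, 0, 0, 0, 0, 0, 0], ![0, -1, 0, 0, 0, 0, 0], ![0, 0, 0, 0, 0, 0, 0]], ![![0, 1, 0,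 0, 0, 0, 0], ![-1, 0, 0, 0, 0, 0, 0], ![0, 0, 0, 0, 0, 0, 0], ![0, 0, 0, 0, 0, 0, 0], ![0, 0, 0, 0, 0, -1, 0], ![0, 0, 0, 0, 1, 0, 0], ![0, 0, 0, 0, 0, 0, 0]], ![![0, 0, -1, 0, 0, 0, 0], ![0, 0, 0, 0, 0, 0, 0], ![1, 0, 0, 0, 0, 0, 0], ![0, 0, 0, 0, 0, 1, 0], ![0, 0, 0, 0, 0, 0, 0], ![0, 0, 0, -1, 0, 0, 0], ![0, 0, 0, 0, 0, 0, 0]], ![![0, 0, 0, 0, 0, 0, 0], ![0, 0, -1, 0, 0, 0, 0], ![0, 1, 0, 0, 0, 0, 0], ![0, 0, 0, 0, -1, 0, 0], ![0, 0, 0, 1, 0, 0, 0], ![0, 0, 0, 0, 0, 0, 0], ![0, 0, 0, 0, 0, 0, 0]], ![![0, 0, 0, 0, 0, 0, 0], ![0, 0, 0, 0, 0, 0, 0], ![0, 0, 0, 0, 0, 0, 0], ![0, 0, 0, 0, 0, 0, 0], ![0, 0, 0, 0, 0, 0, 0], ![0, 0, 0, 0, 0, 0, 0], ![0, 0, 0,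 0, 0, 0, 0]]]] a b c d

def phi0Z : Fin 7 → Fin 7 → Fin 7 → ℤ := fun a b c =>
  if (a, b, c) = (0, 1, 2) then 1
  else if (a, b, c) = (0, 3, 4) then 1
  else if (a, b, c) = (0, 5, 6) then 1
  else if (a, b, c) = (1, 3, 5) then 1
  else if (a, b, c) = (1, 4, 6) then -1
  else if (a, b, c) = (2, 3, 6) then -1
  else if (a, b, c) = (2, 4, 5) then -1
  else 0

def psi0Z : Fin 7 → Fin 7 → Fin 7 → Fin 7 → ℤ := fun a b c d =>
  if (a, b, c, d) = (3, 4, 5, 6) then 1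
  else if (a, b, c, d) = (1, 2, 5, 6) then 1
  else if (a, b, c, d) = (1, 2, 3, 4) then 1
  else if (a, b, c, d) = (0, 2, 4, 6) then 1
  else if (a, b, c, d) = (0, 2, 3, 5) then -1
  else if (a, b, c, d) = (0, 1, 4, 5) then -1
  else if (a, b, c, d) = (0, 1, 3, 6) then -1
  else 0

def deltaZ (a b : Fin 7) : ℤ := if a = b then 1 else 0

def phiZ (a b c : Fin 7) : ℤ :=
  ∑ σ : Equiv.Perm (Fin 3),
    (Equiv.Perm.sign σ : ℤ) * phi0Z (![a, b, c] (σ 0)) (![a, b, c] (σ 1)) (![a, b, c] (σ 2))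

def TZ (x : Fin 4 → Fin 7) : ℤ := psiT (x 0) (x 1) (x 2) (x 3)

set_option maxHeartbeats 4000000

/-! ### Decide lemmas (integer level) -/

lemma phiZ_eq_phiT : ∀ a b c : Fin 7, phiZ a b c = phiT a b c := by decide

lemma Z1 : ∀ a b c e : Fin 7, ∑ m : Fin 7, phiT m a b * phiT m c e
    = deltaZ a c * deltaZ b e - deltaZ a e * deltaZ b c + psiT a b c e := by decide

lemma phiT_cyc : ∀ a b c : Fin 7, phiT a b c = phiT c a b := by decide

lemma phiT_sw : ∀ m c d : Fin 7, phiT m d c = - phiT m c d := by decide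

lemma psiT_sw01 : ∀ a b c d : Fin 7, psiT b a c d = - psiT a b c d := by decide
lemma psiT_sw12 : ∀ a b c d : Fin 7, psiT a c b d = - psiT a b c d := by decide
lemma psiT_sw23 : ∀ a b c d : Fin 7, psiT a b d c = - psiT a b c d := by decide

lemma psiT_sorted : ∀ a b c d : Fin 7, a < b → b < c → c < d →
    psiT a b c d = psi0Z a b c d := by decide

lemma psiT_rep1 : ∀ a c d : Fin 7, psiT a a c d = 0 := by decide
lemma psiT_rep2 : ∀ a c d : Fin 7, psiT a c a d = 0 := by decide
lemma psiT_rep3 : ∀ a c d : Fin 7, psiT a c d a = 0 := by decide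
lemma psiT_rep4 : ∀ a c d : Fin 7, psiT c a a d = 0 := by decide
lemma psiT_rep5 : ∀ a c d : Fin 7, psiT c a d a = 0 := by decide
lemma psiT_rep6 : ∀ a c d : Fin 7, psiT c d a a = 0 := by decide

lemma perm4_desc : ∀ σ : Equiv.Perm (Fin 4), σ ≠ 1 → ∃ i j : Fin 4, i < j ∧ σ j < σ i := by
  decide

lemma psiT_sw02 : ∀ a b c d : Fin 7, psiT c b a d = - psiT a b c d := by
  intro a b c d
  rw [psiT_sw01 b c a d, psiT_sw12 b a c d, psiT_sw01 a b c d]; ring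

lemma psiT_sw13 : ∀ a b c d : Fin 7, psiT a d c b = - psiT a b c d := by
  intro a b c d
  rw [psiT_sw12 a c d b, psiT_sw23 a c b d, psiT_sw12 a b c d]; ring

lemma psiT_sw03 : ∀ a b c d : Fin 7, psiT d b c a = - psiT a b c d := by
  intro a b c d
  rw [psiT_sw01 b d c a, psiT_sw12 b c d a, psiT_sw23 b c a d, psiT_sw12 b a c d,
    psiT_sw01 a b c d]; ring

lemma TZ_swap (i j : Fin 4) (hij : i ≠ j) (x : Fin 4 → Fin 7) :
    TZ (x ∘ Equiv.swap i j) = - TZ x := by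
  have hc : TZ (x ∘ Equiv.swap i j)
      = psiT (x (Equiv.swap i j 0)) (x (Equiv.swap i j 1))
          (x (Equiv.swap i j 2)) (x (Equiv.swap i j 3)) := rfl
  fin_cases i <;> fin_cases j <;> simp only [hc] <;>
    simp only [Equiv.swap_apply_def] <;> norm_num <;>
    first
      | exact (hij rfl).elim
      | exact psiT_sw01 _ _ _ _
      | exact psiT_sw12 _ _ _ _
      | exact psiT_sw23 _ _ _ _
      | exact psiT_sw02 _ _ _ _
      | exact psiT_sw13 _ _ _ _
      | exact psiT_sw03 _ _ _ _

lemma TZ_perm (τ : Equiv.Perm (Fin 4)) : ∀ x : Fin 4 → Fin 7,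
    TZ (x ∘ τ) = (Equiv.Perm.sign τ : ℤ) * TZ x := by
  refine Equiv.Perm.swap_induction_on τ (fun x => ?_) (fun σ i j hij ih x => ?_)
  · simp [Function.comp_def]
  · have hcomp : x ∘ ⇑(Equiv.swap i j * σ) = (x ∘ Equiv.swap i j) ∘ ⇑σ := rfl
    rw [hcomp, ih (x ∘ Equiv.swap i j), TZ_swap i j hij x,
      Equiv.Perm.sign_mul, Equiv.Perm.sign_swap hij]
    push_cast
    ring

/-! ### Real antisymmetrization machinery for `psi` -/

def Fpsi (x : Fin 4 → Fin 7) : ℝ :=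
  ∑ σ : Equiv.Perm (Fin 4),
    ((Equiv.Perm.sign σ : ℤ) : ℝ) * psi0 (x (σ 0)) (x (σ 1)) (x (σ 2)) (x (σ 3))

lemma psi_eq_Fpsi (a b c d : Fin 7) : psi a b c d = Fpsi ![a, b, c, d] := rfl

lemma Fpsi_perm (τ : Equiv.Perm (Fin 4)) (x : Fin 4 → Fin 7) :
    Fpsi (x ∘ τ) = ((Equiv.Perm.sign τ : ℤ) : ℝ) * Fpsi x := by
  have hs : ((Equiv.Perm.sign τ : ℤ) : ℝ) * ((Equiv.Perm.sign τ : ℤ) : ℝ) = 1 := by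
    rcases Int.units_eq_one_or (Equiv.Perm.sign τ) with h | h <;> rw [h] <;> norm_num
  have key : Fpsi (x ∘ τ)
      = ∑ ρ : Equiv.Perm (Fin 4),
          ((Equiv.Perm.sign τ : ℤ) : ℝ) *
            (((Equiv.Perm.sign ρ : ℤ) : ℝ) *
              psi0 (x (ρ 0)) (x (ρ 1)) (x (ρ 2)) (x (ρ 3))) := by
    rw [Fpsi]
    refine Fintype.sum_equiv (Equiv.mulLeft τ) _ _ ?_
    intro σ
    have happ : ∀ k : Fin 4, (x ∘ τ) (σ k) = x ((Equiv.mulLeft τ σ) k) := by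
      intro k; simp [Equiv.Perm.mul_apply]
    rw [happ 0, happ 1, happ 2, happ 3]
    have hsign : ((Equiv.Perm.sign (Equiv.mulLeft τ σ) : ℤ) : ℝ)
        = ((Equiv.Perm.sign τ : ℤ) : ℝ) * ((Equiv.Perm.sign σ : ℤ) : ℝ) := by
      have hms : (Equiv.mulLeft τ) σ = τ * σ := rfl
      rw [hms, Equiv.Perm.sign_mul]
      push_cast
      ring
    rw [hsign]
    set P : ℝ := psi0 (x ((Equiv.mulLeft τ σ) 0)) (x ((Equiv.mulLeft τ σ) 1))
      (x ((Equiv.mulLeft τ σ) 2)) (x ((Equiv.mulLeft τ σ) 3)) with hPdef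
    have : ((Equiv.Perm.sign τ : ℤ) : ℝ)
        * (((Equiv.Perm.sign τ : ℤ) : ℝ) * ((Equiv.Perm.sign σ : ℤ) : ℝ) * P)
        = (((Equiv.Perm.sign τ : ℤ) : ℝ) * ((Equiv.Perm.sign τ : ℤ) : ℝ))
          * (((Equiv.Perm.sign σ : ℤ) : ℝ) * P) := by ring
    rw [this, hs, one_mul]
  rw [key, ← Finset.mul_sum, Fpsi]

lemma Fpsi_repeat (x : Fin 4 → Fin 7) (i j : Fin 4) (hij : i ≠ j) (h : x i = x j) :
    Fpsi x = 0 := by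
  have hx : x ∘ Equiv.swap i j = x := by
    funext k
    simp only [Function.comp_apply, Equiv.swap_apply_def]
    split_ifs with h1 h2
    · subst h1; exact h.symm
    · subst h2; exact h
    · rfl
  have := Fpsi_perm (Equiv.swap i j) x
  rw [hx, Equiv.Perm.sign_swap hij] at this
  push_cast at this
  linarith

lemma psi0_cast (a b c d : Fin 7) : psi0 a b c d = ((psi0Z a b c d : ℤ) : ℝ) := by
  unfold psi0 psi0Z
  split_ifs <;> norm_num

lemma psi0_zero {w x y z : Fin 7} (h : ¬(w < x ∧ x < y ∧ y < z)) : psi0 w x y z = 0 := by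
  unfold psi0
  split_ifs <;>
    first
      | rfl
      | (exfalso
         obtain ⟨rfl, rfl, rfl, rfl⟩ := by simpa using ‹(w, x, y, z) = _›
         exact h (by decide))

lemma chain4 (y : Fin 4 → Fin 7) (h1 : y 0 < y 1) (h2 : y 1 < y 2) (h3 : y 2 < y 3) :
    ∀ i j : Fin 4, i < j → y i < y j := by
  intro i j hij
  fin_cases i <;> fin_cases j <;>
    first
      | exact absurd hij (by decide)
      | exact h1
      | exact h2
      | exact h3
      | exact lt_trans h1 h2
      | exact lt_trans h2 h3
      | exact lt_trans (lt_trans h1 h2) h3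

lemma Fpsi_sorted (y : Fin 4 → Fin 7) (h1 : y 0 < y 1) (h2 : y 1 < y 2) (h3 : y 2 < y 3) :
    Fpsi y = psi0 (y 0) (y 1) (y 2) (y 3) := by
  rw [Fpsi]
  rw [Finset.sum_eq_single (1 : Equiv.Perm (Fin 4))]
  · simp
  · intro σ _ hσ
    obtain ⟨i, j, hij, hd⟩ := perm4_desc σ hσ
    have hz : psi0 (y (σ 0)) (y (σ 1)) (y (σ 2)) (y (σ 3)) = 0 := by
      apply psi0_zero
      rintro ⟨k1, k2, k3⟩
      have hlt := chain4 (fun k => y (σ k)) k1 k2 k3 i j hij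
      have hgt := chain4 y h1 h2 h3 (σ j) (σ i) hd
      exact absurd hlt (not_lt.mpr (le_of_lt hgt))
    rw [hz, mul_zero]
  · intro h; exact absurd (Finset.mem_univ _) h

lemma TZ_eq_matrix (a b c d : Fin 7) : TZ ![a, b, c, d] = psiT a b c d := rfl

lemma psi_cast (a b c d : Fin 7) : psi a b c d = ((psiT a b c d : ℤ) : ℝ) := by
  rw [psi_eq_Fpsi, ← TZ_eq_matrix]
  set x : Fin 4 → Fin 7 := ![a, b, c, d] with hxdef
  clear_value x
  by_cases hinj : Function.Injective x
  · set τ : Equiv.Perm (Fin 4) := Tuple.sort x with hτ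
    have hmono : Monotone (x ∘ τ) := Tuple.monotone_sort x
    have hsm : StrictMono (x ∘ τ) :=
      hmono.strictMono_of_injective (hinj.comp (Equiv.injective _))
    have hx : x = (x ∘ τ) ∘ ⇑τ⁻¹ := by
      funext k; simp
    have c01 : (x ∘ τ) 0 < (x ∘ τ) 1 := hsm (by decide)
    have c12 : (x ∘ τ) 1 < (x ∘ τ) 2 := hsm (by decide)
    have c23 : (x ∘ τ) 2 < (x ∘ τ) 3 := hsm (by decide)
    have hsortedT : TZ (x ∘ τ) = psi0Z ((x ∘ τ) 0) ((x ∘ τ) 1) ((x ∘ τ) 2) ((x ∘ τ) 3) := by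
      have := psiT_sorted ((x ∘ τ) 0) ((x ∘ τ) 1) ((x ∘ τ) 2) ((x ∘ τ) 3) c01 c12 c23
      exact this
    calc Fpsi x = Fpsi ((x ∘ τ) ∘ ⇑τ⁻¹) := by rw [← hx]
      _ = ((Equiv.Perm.sign τ⁻¹ : ℤ) : ℝ) * Fpsi (x ∘ τ) := Fpsi_perm τ⁻¹ (x ∘ τ)
      _ = ((Equiv.Perm.sign τ⁻¹ : ℤ) : ℝ)
            * ((psi0Z ((x ∘ τ) 0) ((x ∘ τ) 1) ((x ∘ τ) 2) ((x ∘ τ) 3) : ℤ) : ℝ) := by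
          rw [Fpsi_sorted (x ∘ τ) c01 c12 c23, psi0_cast]
      _ = (((Equiv.Perm.sign τ⁻¹ : ℤ)
            * psi0Z ((x ∘ τ) 0) ((x ∘ τ) 1) ((x ∘ τ) 2) ((x ∘ τ) 3) : ℤ) : ℝ) := by
          push_cast; ring
      _ = ((TZ x : ℤ) : ℝ) := by
          congr 1
          have hperm := TZ_perm τ⁻¹ (x ∘ τ)
          rw [← hx] at hperm
          rw [hperm, hsortedT]
  · obtain ⟨i, j, hxy, hij⟩ := Function.not_injective_iff.mp hinj
    rw [Fpsi_repeat x i j hij hxy]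
    have hTZ : TZ x = 0 := by
      have hx : x ∘ Equiv.swap i j = x := by
        funext k
        simp only [Function.comp_apply, Equiv.swap_apply_def]
        split_ifs with h1 h2
        · subst h1; exact hxy.symm
        · subst h2; exact hxy
        · rfl
      have := TZ_swap i j hij x
      rw [hx] at this
      omega
    rw [hTZ]; norm_num

/-! ### Real-level lemmas -/

lemma phi0_cast (a b c : Fin 7) : phi0 a b c = ((phi0Z a b c : ℤ) : ℝ) := by
  unfold phi0 phi0Z
  split_ifs <;> norm_num

lemma delta_cast (a b : Fin 7) : delta a b = ((deltaZ a b : ℤ) : ℝ) := by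
  unfold delta deltaZ
  split_ifs <;> norm_num

lemma phi_cast (a b c : Fin 7) : phi a b c = ((phiT a b c : ℤ) : ℝ) := by
  rw [← phiZ_eq_phiT, phi, phiZ]
  push_cast
  refine Finset.sum_congr rfl fun σ _ => ?_
  rw [phi0_cast]

lemma phi_cyc (a b c : Fin 7) : phi a b c = phi c a b := by
  rw [phi_cast, phi_cast, phiT_cyc]

lemma phi_sw (m c d : Fin 7) : phi m d c = - phi m c d := by
  rw [phi_cast, phi_cast, phiT_sw]; push_cast; ring

lemma psi_sw12 (a b c d : Fin 7) : psi a c b d = - psi a b c d := by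
  rw [psi_cast, psi_cast, psiT_sw12]; push_cast; ring

/-- The fundamental contraction identity `φ_{mab} φ_{mce} = δ_{ac}δ_{be} − δ_{ae}δ_{bc} + ψ_{abce}`. -/
lemma contr (a b c e : Fin 7) :
    ∑ m : Fin 7, phi m a b * phi m c e
      = delta a c * delta b e - delta a e * delta b c + psi a b c e := by
  have h := Z1 a b c e
  have : ((∑ m : Fin 7, phiT m a b * phiT m c e : ℤ) : ℝ)
      = ((deltaZ a c * deltaZ b e - deltaZ a e * deltaZ b c + psiT a b c e : ℤ) : ℝ) :=
    congrArg (fun t : ℤ => (t : ℝ)) h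
  push_cast at this
  simp only [phi_cast, delta_cast, psi_cast]
  push_cast
  exact this

/-- Contraction in the second position: `φ_{abm} φ_{mce} = δ_{ac}δ_{be} − δ_{ae}δ_{bc} + ψ_{abce}`. -/
lemma contr2 (a b c e : Fin 7) :
    ∑ m : Fin 7, phi a b m * phi m c e
      = delta a c * delta b e - delta a e * delta b c + psi a b c e := by
  rw [← contr a b c e]
  refine Finset.sum_congr rfl fun m _ => ?_
  rw [phi_cyc a b m]

lemma sum_delta_right (f : Fin 7 → ℝ) (b : Fin 7) : ∑ d : Fin 7, f d * delta d b = f b := by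
  simp [delta, mul_ite, Finset.sum_ite_eq']

/-- The key projection identity. -/
lemma K1 (β : Fin 7 → Fin 7 → ℝ) (a b : Fin 7) :
    ∑ m : Fin 7, (∑ c : Fin 7, ∑ d : Fin 7, phi m c d * β c d) * phi m a b
      = (∑ c : Fin 7, ∑ d : Fin 7, β c d * psi c d a b) + (β a b - β b a) := by
  have step1 : ∑ m : Fin 7, (∑ c : Fin 7, ∑ d : Fin 7, phi m c d * β c d) * phi m a b
      = ∑ c : Fin 7, ∑ d : Fin 7, β c d * ∑ m : Fin 7, phi m c d * phi m a b := by
    simp only [Finset.sum_mul]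
    rw [Finset.sum_comm]
    refine Finset.sum_congr rfl fun c _ => ?_
    rw [Finset.sum_comm]
    refine Finset.sum_congr rfl fun d _ => ?_
    rw [Finset.mul_sum]
    refine Finset.sum_congr rfl fun m _ => ?_
    ring
  rw [step1]
  have step2 : ∀ c d : Fin 7, β c d * ∑ m : Fin 7, phi m c d * phi m a b
      = β c d * psi c d a b
        + (β c d * (delta c a * delta d b) - β c d * (delta c b * delta d a)) := by
    intro c d
    rw [contr c d a b]
    ring
  simp only [step2]
  rw [Finset.sum_congr rfl fun c _ => Finset.sum_add_distrib, Finset.sum_add_distrib]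
  congr 1
  have e1 : ∑ c : Fin 7, ∑ d : Fin 7,
      (β c d * (delta c a * delta d b) - β c d * (delta c b * delta d a))
      = (∑ c : Fin 7, ∑ d : Fin 7, β c d * (delta c a * delta d b))
        - ∑ c : Fin 7, ∑ d : Fin 7, β c d * (delta c b * delta d a) := by
    rw [← Finset.sum_sub_distrib]
    refine Finset.sum_congr rfl fun c _ => ?_
    rw [← Finset.sum_sub_distrib]
  rw [e1]
  congr 1
  · -- ∑ c ∑ d β c d δ_{ca} δ_{db} = β a b
    have inner : ∀ c : Fin 7, ∑ d : Fin 7, β c d * (delta c a * delta d b)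
        = (β c b) * delta c a := by
      intro c
      have : ∀ d : Fin 7, β c d * (delta c a * delta d b) = (β c d * delta c a) * delta d b := by
        intro d; ring
      simp only [this]
      exact sum_delta_right (fun d => β c d * delta c a) b
    simp only [inner]
    exact sum_delta_right (fun c => β c b) a
  · have inner : ∀ c : Fin 7, ∑ d : Fin 7, β c d * (delta c b * delta d a)
        = (β c a) * delta c b := by
      intro c
      have : ∀ d : Fin 7, β c d * (delta c b * delta d a) = (β c d * delta c b) * delta d a := by
        intro d; ring
      simp only [this]
      exact sum_delta_right (fun d => β c d * delta c b) a
    simp only [inner]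
    exact sum_delta_right (fun c => β c a) b

lemma sum_delta_left (f : Fin 7 → ℝ) (b : Fin 7) : ∑ d : Fin 7, f d * delta b d = f b := by
  simp [delta, mul_ite, Finset.sum_ite_eq]

lemma sum_comm3 (g : Fin 7 → Fin 7 → Fin 7 → ℝ) :
    ∑ d : Fin 7, ∑ e : Fin 7, ∑ f : Fin 7, g d e f
      = ∑ e : Fin 7, ∑ f : Fin 7, ∑ d : Fin 7, g d e f := by
  rw [Finset.sum_comm]
  exact Finset.sum_congr rfl fun e _ => Finset.sum_comm

/-! ### The main theorem -/

/-- Let `ξ ≠ 0` and let the antisymmetric matrix `α` lie in `Λ²₇`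
(`Σ_{c,d} α_{cd} ψ_{cdab} = 4 α_{ab}`) with `Σ_{m,n,p} ξ_m α_{np} φ_{mnp} = 0`.  Then
`α = π₇(ξ∧γ)` for some `γ ∈ ℝ⁷`, where `(ξ∧γ)_{ab} = ξ_a γ_b − ξ_b γ_a` and
`π₇(σ)_{ab} = (1/3)(σ_{ab} + (1/2) Σ_{c,d} σ_{cd} ψ_{cdab})`.  (Exactness at `Λ²₇` on the
level of leading symbols of the canonical `G₂` complex.) -/
theorem stmt_15 (ξ : Fin 7 → ℝ) (hξ : ξ ≠ 0) (α : Fin 7 → Fin 7 → ℝ)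
    (hskew : ∀ a b, α b a = -α a b)
    (h7 : ∀ a b : Fin 7, ∑ c : Fin 7, ∑ d : Fin 7, α c d * psi c d a b = 4 * α a b)
    (hker : ∑ m : Fin 7, ∑ n : Fin 7, ∑ p : Fin 7, ξ m * α n p * phi m n p = 0) :
    ∃ γ : Fin 7 → ℝ, ∀ a b : Fin 7,
      α a b = (1 / 3 : ℝ) * ((ξ a * γ b - ξ b * γ a) +
        (1 / 2 : ℝ) * ∑ c : Fin 7, ∑ d : Fin 7, (ξ c * γ d - ξ d * γ c) * psi c d a b) := by
  -- the squared norm of ξ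
  set S : ℝ := ∑ i : Fin 7, ξ i * ξ i with hSdef
  have hS : 0 < S := by
    obtain ⟨i0, hi0⟩ := Function.ne_iff.mp hξ
    exact Finset.sum_pos' (fun i _ => mul_self_nonneg (ξ i))
      ⟨i0, Finset.mem_univ i0, mul_self_pos.mpr hi0⟩
  have hS' : S ≠ 0 := ne_of_gt hS
  -- the vector v with α = v ⌟ φ
  set v : Fin 7 → ℝ := fun m => (1 / 6 : ℝ) * ∑ c : Fin 7, ∑ d : Fin 7, phi m c d * α c d
    with hv
  -- reconstruction of α from v
  have halpha : ∀ a b : Fin 7, α a b = ∑ m : Fin 7, v m * phi m a b := by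
    intro a b
    have hK := K1 α a b
    rw [h7 a b, hskew a b] at hK
    have hval : ∑ m : Fin 7, v m * phi m a b
        = (1 / 6 : ℝ) * ∑ m : Fin 7, (∑ c : Fin 7, ∑ d : Fin 7, phi m c d * α c d) * phi m a b := by
      rw [Finset.mul_sum]
      refine Finset.sum_congr rfl fun m _ => ?_
      simp only [hv]
      ring
    rw [hval, hK]
    ring
  -- ξ ⊥ v
  have hxiv : ∑ m : Fin 7, ξ m * v m = 0 := by
    have hval : ∑ m : Fin 7, ξ m * v m
        = (1 / 6 : ℝ) * ∑ m : Fin 7, ∑ n : Fin 7, ∑ p : Fin 7, ξ m * α n p * phi m n p := by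
      rw [Finset.mul_sum]
      refine Finset.sum_congr rfl fun m _ => ?_
      simp only [hv]
      have hmn : (∑ n : Fin 7, ∑ p : Fin 7, ξ m * α n p * phi m n p)
          = ξ m * ∑ c : Fin 7, ∑ d : Fin 7, phi m c d * α c d := by
        rw [Finset.mul_sum]
        refine Finset.sum_congr rfl fun n _ => ?_
        rw [Finset.mul_sum]
        refine Finset.sum_congr rfl fun p _ => ?_
        ring
      rw [hmn]
      ring
    rw [hval, hker, mul_zero]
  -- the cross product w = ξ × v
  set w : Fin 7 → ℝ := fun e => ∑ c : Fin 7, ∑ d : Fin 7, phi e c d * ξ c * v d with hw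
  -- the double cross product identity: ξ × (ξ × v) = -S v
  have hXw : ∀ m : Fin 7, ∑ c : Fin 7, ∑ d : Fin 7, phi m c d * ξ c * w d = - S * v m := by
    intro m
    have step1 : ∑ c : Fin 7, ∑ d : Fin 7, phi m c d * ξ c * w d
        = ∑ c : Fin 7, ∑ e : Fin 7, ∑ f : Fin 7,
            (∑ d : Fin 7, phi m c d * phi d e f) * (ξ c * ξ e * v f) := by
      refine Finset.sum_congr rfl fun c _ => ?_
      have expand : ∀ d : Fin 7, phi m c d * ξ c * w d
          = ∑ e : Fin 7, ∑ f : Fin 7, phi m c d * phi d e f * (ξ c * ξ e * v f) := by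
        intro d
        simp only [hw]
        rw [Finset.mul_sum]
        refine Finset.sum_congr rfl fun e _ => ?_
        rw [Finset.mul_sum]
        refine Finset.sum_congr rfl fun f _ => ?_
        ring
      simp only [expand]
      rw [sum_comm3 (fun d e f => phi m c d * phi d e f * (ξ c * ξ e * v f))]
      refine Finset.sum_congr rfl fun e _ => Finset.sum_congr rfl fun f _ => ?_
      rw [Finset.sum_mul]
    rw [step1]
    have step2 : ∀ c e f : Fin 7,
        (∑ d : Fin 7, phi m c d * phi d e f) * (ξ c * ξ e * v f)
          = (delta m e * delta c f) * (ξ c * ξ e * v f)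
            - (delta m f * delta c e) * (ξ c * ξ e * v f)
            + psi m c e f * (ξ c * ξ e * v f) := by
      intro c e f
      rw [contr2 m c e f]
      ring
    simp only [step2]
    simp only [Finset.sum_add_distrib, Finset.sum_sub_distrib]
    have hA1 : ∑ c : Fin 7, ∑ e : Fin 7, ∑ f : Fin 7,
        (delta m e * delta c f) * (ξ c * ξ e * v f) = 0 := by
      have hf : ∀ c e : Fin 7, ∑ f : Fin 7, (delta m e * delta c f) * (ξ c * ξ e * v f)
          = (delta m e * ξ c * ξ e) * v c := by
        intro c e
        have : ∀ f : Fin 7, (delta m e * delta c f) * (ξ c * ξ e * v f)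
            = (delta m e * ξ c * ξ e) * (v f * delta c f) := fun f => by ring
        simp only [this]
        rw [← Finset.mul_sum, sum_delta_left v c]
      simp only [hf]
      have he : ∀ c : Fin 7, ∑ e : Fin 7, (delta m e * ξ c * ξ e) * v c
          = (ξ c * v c) * ξ m := by
        intro c
        have : ∀ e : Fin 7, (delta m e * ξ c * ξ e) * v c
            = (ξ c * v c) * (ξ e * delta m e) := fun e => by ring
        simp only [this]
        rw [← Finset.mul_sum, sum_delta_left ξ m]
      simp only [he]
      rw [← Finset.sum_mul, hxiv, zero_mul]
    have hA2 : ∑ c : Fin 7, ∑ e : Fin 7, ∑ f : Fin 7,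
        (delta m f * delta c e) * (ξ c * ξ e * v f) = S * v m := by
      have hf : ∀ c e : Fin 7, ∑ f : Fin 7, (delta m f * delta c e) * (ξ c * ξ e * v f)
          = (delta c e * ξ c * ξ e) * v m := by
        intro c e
        have : ∀ f : Fin 7, (delta m f * delta c e) * (ξ c * ξ e * v f)
            = (delta c e * ξ c * ξ e) * (v f * delta m f) := fun f => by ring
        simp only [this]
        rw [← Finset.mul_sum, sum_delta_left v m]
      simp only [hf]
      have he : ∀ c : Fin 7, ∑ e : Fin 7, (delta c e * ξ c * ξ e) * v m
          = (ξ c * ξ c) * v m := by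
        intro c
        have : ∀ e : Fin 7, (delta c e * ξ c * ξ e) * v m
            = (ξ c * v m) * (ξ e * delta c e) := fun e => by ring
        simp only [this]
        rw [← Finset.mul_sum, sum_delta_left ξ c]
        ring
      simp only [he]
      rw [← Finset.sum_mul, hSdef]
    have hA3 : ∑ c : Fin 7, ∑ e : Fin 7, ∑ f : Fin 7,
        psi m c e f * (ξ c * ξ e * v f) = 0 := by
      set P : ℝ := ∑ c : Fin 7, ∑ e : Fin 7, ∑ f : Fin 7, psi m c e f * (ξ c * ξ e * v f)
        with hP
      have hPP : P = - P := by
        calc P = ∑ e : Fin 7, ∑ c : Fin 7, ∑ f : Fin 7, psi m c e f * (ξ c * ξ e * v f) := by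
              rw [hP]; exact Finset.sum_comm
          _ = ∑ e : Fin 7, ∑ c : Fin 7, - ∑ f : Fin 7, psi m e c f * (ξ e * ξ c * v f) := by
              refine Finset.sum_congr rfl fun e _ => Finset.sum_congr rfl fun c _ => ?_
              rw [← Finset.sum_neg_distrib]
              refine Finset.sum_congr rfl fun f _ => ?_
              rw [psi_sw12 m e c f]
              ring
          _ = - P := by
              rw [hP]
              rw [← Finset.sum_neg_distrib]
              refine Finset.sum_congr rfl fun e _ => ?_
              rw [← Finset.sum_neg_distrib]
      linarith
    rw [hA1, hA2, hA3]
    ring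
  -- the candidate γ
  set γ : Fin 7 → ℝ := fun i => (-3 / S) * w i with hγ
  refine ⟨γ, fun a b => ?_⟩
  -- (1/6) ∑ φ_{mcd} (ξ∧γ)_{cd} = v m
  have hu : ∀ m : Fin 7,
      ∑ c : Fin 7, ∑ d : Fin 7, phi m c d * (ξ c * γ d - ξ d * γ c) = 6 * v m := by
    intro m
    have hsplit : ∀ c d : Fin 7, phi m c d * (ξ c * γ d - ξ d * γ c)
        = phi m c d * (ξ c * γ d) - phi m c d * (ξ d * γ c) := fun c d => by ring
    simp only [hsplit]
    simp only [Finset.sum_sub_distrib]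
    have hswapY : ∑ c : Fin 7, ∑ d : Fin 7, phi m c d * (ξ d * γ c)
        = - ∑ c : Fin 7, ∑ d : Fin 7, phi m c d * (ξ c * γ d) := by
      calc ∑ c : Fin 7, ∑ d : Fin 7, phi m c d * (ξ d * γ c)
          = ∑ d : Fin 7, ∑ c : Fin 7, phi m c d * (ξ d * γ c) := Finset.sum_comm
        _ = ∑ d : Fin 7, ∑ c : Fin 7, - (phi m d c * (ξ d * γ c)) := by
            refine Finset.sum_congr rfl fun d _ => Finset.sum_congr rfl fun c _ => ?_
            rw [phi_sw m d c]
            ring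
        _ = - ∑ c : Fin 7, ∑ d : Fin 7, phi m c d * (ξ c * γ d) := by
            rw [← Finset.sum_neg_distrib]
            refine Finset.sum_congr rfl fun d _ => ?_
            rw [← Finset.sum_neg_distrib]
    rw [hswapY]
    have hY : ∑ c : Fin 7, ∑ d : Fin 7, phi m c d * (ξ c * γ d) = 3 * v m := by
      have hval : ∑ c : Fin 7, ∑ d : Fin 7, phi m c d * (ξ c * γ d)
          = (-3 / S) * ∑ c : Fin 7, ∑ d : Fin 7, phi m c d * ξ c * w d := by
        rw [Finset.mul_sum]
        refine Finset.sum_congr rfl fun c _ => ?_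
        rw [Finset.mul_sum]
        refine Finset.sum_congr rfl fun d _ => ?_
        simp only [hγ]
        ring
      rw [hval, hXw m]
      field_simp
    rw [hY]
    ring
  -- assemble
  have hK := K1 (fun c d => ξ c * γ d - ξ d * γ c) a b
  have hL : ∑ m : Fin 7, (∑ c : Fin 7, ∑ d : Fin 7, phi m c d * (ξ c * γ d - ξ d * γ c))
      * phi m a b = 6 * α a b := by
    have : ∀ m : Fin 7, (∑ c : Fin 7, ∑ d : Fin 7, phi m c d * (ξ c * γ d - ξ d * γ c))
        * phi m a b = 6 * (v m * phi m a b) := by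
      intro m
      rw [hu m]
      ring
    simp only [this]
    rw [← Finset.mul_sum, ← halpha a b]
  rw [hL] at hK
  linarith [hK]
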